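/- Let X be a vector lattice with X~ separating points of X, and suppose X has the b-property. Then a net x_α in X converges bbuo to x if and only if it converges in order to x. -/

import Mathlib

set_option linter.unusedSectionVars false
set_option maxHeartbeats 1000000

open Filter Set

section ODual

variable (E : Type*) [AddCommGroup E] [Preorder E] [Module ℝ E]

/-- The order (bounded) dual: linear functionals bounded on order intervals. -/
noncomputable def obDual : Submodule ℝ (E →ₗ[ℝ] ℝ) where
  carrier := {f | ∀ w : E, ∃ M : ℝ, ∀ x : E, -w ≤ x → x ≤ w → |f x| ≤ M}
  zero_mem' := fun w => ⟨0, fun x _ _ => by simp⟩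
  add_mem' := fun {f g} hf hg w => by
    obtain ⟨M, hM⟩ := hf w
    obtain ⟨N, hN⟩ := hg w
    refine ⟨M + N, fun x h1 h2 => ?_⟩
    calc |(f + g) x| = |f x + g x| := by simp
    _ ≤ |f x| + |g x| := abs_add_le _ _
    _ ≤ M + N := add_le_add (hM x h1 h2) (hN x h1 h2)
  smul_mem' := fun c f hf => by
    intro w
    obtain ⟨M, hM⟩ := hf w
    refine ⟨|c| * M, fun x h1 h2 => ?_⟩
    calc |(c • f) x| = |c| * |f x| := by simp [abs_mul]
    _ ≤ |c| * M := mul_le_mul_of_nonneg_left (hM x h1 h2) (abs_nonneg c)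

/-- The pointwise-on-positive-elements (pre)order on a space of functionals. -/
instance instSubPre (Y : Submodule ℝ (E →ₗ[ℝ] ℝ)) : Preorder Y where
  le f g := ∀ x : E, 0 ≤ x → (f : E →ₗ[ℝ] ℝ) x ≤ (g : E →ₗ[ℝ] ℝ) x
  le_refl f x _ := le_rfl
  le_trans f g h h1 h2 x hx := (h1 x hx).trans (h2 x hx)

variable {E}

theorem subPre_le_iff {Y : Submodule ℝ (E →ₗ[ℝ] ℝ)} {f g : Y} :
    f ≤ g ↔ ∀ x : E, 0 ≤ x → (f : E →ₗ[ℝ] ℝ) x ≤ (g : E →ₗ[ℝ] ℝ) x := Iff.rfl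

/-- Order convergence of a net to a limit (sandwich form: eventually
`l - d ≤ x_α ≤ l + d` for every `d` in a set directed downward to `0`). -/
def OConvTo {ι : Type*} [Preorder ι] (x : ι → E) (l : E) : Prop :=
  ∃ D : Set E, D.Nonempty ∧ DirectedOn (· ≥ ·) D ∧ IsGLB D 0 ∧
    ∀ d ∈ D, ∃ α₀ : ι, ∀ α, α₀ ≤ α → l - d ≤ x α ∧ x α ≤ l + d

/-- Order continuity of a linear functional: `f(x_α) → 0` whenever `x_α ↓ 0`. -/
def OrdContE (f : E →ₗ[ℝ] ℝ) : Prop :=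
  ∀ D : Set E, D.Nonempty → DirectedOn (· ≥ ·) D → IsGLB D 0 →
    ∀ ε : ℝ, 0 < ε → ∃ d ∈ D, ∀ e ∈ D, e ≤ d → |f e| < ε

end ODual

section VL

variable (X : Type*) [Lattice X] [AddCommGroup X]
  [CovariantClass X X (· + ·) (· ≤ ·)] [Module ℝ X] [PosSMulMono ℝ X]

variable {X} in
/-- Unbounded order convergence: `|x_α - l| ⊓ u →o 0` for every `u ≥ 0`. -/
def uoConvTo {ι : Type*} [Preorder ι] (x : ι → X) (l : X) : Prop :=
  ∀ u : X, 0 ≤ u → OConvTo (fun α => |x α - l| ⊓ u) (0 : X)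

/-- The canonical evaluation of `x ∈ X` on a space `Y` of functionals on `X`. -/
def hatFun (Y : Submodule ℝ (X →ₗ[ℝ] ℝ)) (x : X) : Y →ₗ[ℝ] ℝ where
  toFun f := (f : X →ₗ[ℝ] ℝ) x
  map_add' f g := by simp
  map_smul' c f := by simp

theorem hatFun_mem (Y : Submodule ℝ (X →ₗ[ℝ] ℝ)) (x : X) :
    hatFun X Y x ∈ obDual Y := by
  intro w
  refine ⟨(w : X →ₗ[ℝ] ℝ) (x⁺) + (w : X →ₗ[ℝ] ℝ) (x⁻), fun f h1 h2 => ?_⟩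
  have hp : (0 : X) ≤ x⁺ := posPart_nonneg x
  have hn : (0 : X) ≤ x⁻ := negPart_nonneg x
  have e1 := (subPre_le_iff.mp h1) _ hp
  have e2 := (subPre_le_iff.mp h2) _ hp
  have e3 := (subPre_le_iff.mp h1) _ hn
  have e4 := (subPre_le_iff.mp h2) _ hn
  have c1 : -((w : X →ₗ[ℝ] ℝ) (x⁺)) ≤ (f : X →ₗ[ℝ] ℝ) (x⁺) := by simpa using e1
  have c3 : -((w : X →ₗ[ℝ] ℝ) (x⁻)) ≤ (f : X →ₗ[ℝ] ℝ) (x⁻) := by simpa using e3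
  have key : (f : X →ₗ[ℝ] ℝ) x
      = (f : X →ₗ[ℝ] ℝ) (x⁺) - (f : X →ₗ[ℝ] ℝ) (x⁻) := by
    rw [← map_sub, posPart_sub_negPart]
  show |(f : X →ₗ[ℝ] ℝ) x| ≤ _
  rw [key]
  have a1 : |(f : X →ₗ[ℝ] ℝ) (x⁺)| ≤ (w : X →ₗ[ℝ] ℝ) (x⁺) := abs_le.mpr ⟨c1, e2⟩
  have a2 : |(f : X →ₗ[ℝ] ℝ) (x⁻)| ≤ (w : X →ₗ[ℝ] ℝ) (x⁻) := abs_le.mpr ⟨c3, e4⟩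
  have := abs_sub ((f : X →ₗ[ℝ] ℝ) (x⁺)) ((f : X →ₗ[ℝ] ℝ) (x⁻))
  linarith

/-- The canonical embedding of `X` into the order dual of `Y ⊆ X~`. -/
def hatEl (Y : Submodule ℝ (X →ₗ[ℝ] ℝ)) (x : X) : obDual Y :=
  ⟨hatFun X Y x, hatFun_mem X Y x⟩

/-- `X~` separates the points of `X`. -/
def SepPoints : Prop := ∀ x : X, x ≠ 0 → ∃ f : obDual X, (f : X →ₗ[ℝ] ℝ) x ≠ 0

/-- The order on `X~~` (the instance `instSubPre`, which instance search no longer finds here). -/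
noncomputable instance instBidualPre : Preorder (obDual (obDual X)) :=
  instSubPre (obDual X) (obDual (obDual X))

/-- The canonical image of `X` in `X~~` is a regular sublattice:
`x_α ↓ 0` in `X` implies `x̂_α ↓ 0` in `X~~`. -/
def HatRegular : Prop :=
  ∀ D : Set X, D.Nonempty → DirectedOn (· ≥ ·) D → IsGLB D 0 →
    IsGLB (hatEl X (obDual X) '' D) (0 : obDual ↥(obDual X))

variable {X} in
/-- The net `x̂_α` is eventually order bounded in `X~~`. -/
def HatEvOB {ι : Type*} [Preorder ι] (x : ι → X) : Prop :=
  ∃ (b t : obDual ↥(obDual X)) (α₀ : ι), ∀ α, α₀ ≤ α →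
    b ≤ hatEl X (obDual X) (x α) ∧ hatEl X (obDual X) (x α) ≤ t

variable {X} in
/-- Bidual bounded uo-convergence. -/
def bbuoConvTo {ι : Type*} [Preorder ι] (x : ι → X) (l : X) : Prop :=
  uoConvTo x l ∧ HatEvOB x

/-- `X` has the `b`-property: every subset of `X` whose canonical image is
order bounded in `X~~` is order bounded in `X`. -/
def HasBProp : Prop :=
  ∀ A : Set X,
    (∃ b t : obDual ↥(obDual X), ∀ a ∈ A,
        b ≤ hatEl X (obDual X) a ∧ hatEl X (obDual X) a ≤ t) →
    ∃ b t : X, ∀ a ∈ A, b ≤ a ∧ a ≤ t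

/-- The Archimedean property for a lattice-ordered group. -/
def IsArch : Prop := ∀ x y : X, 0 ≤ x → (∀ n : ℕ, n • x ≤ y) → x = 0

end VL

/-!
Order convergence is the same as uo-convergence together with eventual order boundedness of
the net in `X`. A bbuo-convergent net is eventually order bounded only in `X~~`, through its
canonical image, and the `b`-property is exactly what pulls such bounds back to `X`.
-/

section LatticeOrderedGroup

variable {X : Type*} [Lattice X] [AddCommGroup X] [AddLeftMono X]

theorem abs_sub_le_iff_sub_le_and_le_add {y l d : X} :
    |y - l| ≤ d ↔ l - d ≤ y ∧ y ≤ l + d := by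
  rw [abs_le', neg_sub, sub_le_iff_le_add', sub_le_comm, and_comm]

theorem abs_le_abs_sup_abs {a b c : X} (hab : a ≤ b) (hbc : b ≤ c) : |b| ≤ |a| ⊔ |c| :=
  abs_le'.2 ⟨hbc.trans ((le_abs_self c).trans le_sup_right),
    (neg_le_neg_iff.2 hab).trans ((neg_le_abs a).trans le_sup_left)⟩

end LatticeOrderedGroup

def EventuallyOrderBounded {E ι : Type*} [Preorder E] [Preorder ι] (x : ι → E) : Prop :=
  ∃ (b t : E) (α₀ : ι), ∀ α, α₀ ≤ α → b ≤ x α ∧ x α ≤ t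

section Convergence

variable {X : Type*} [Lattice X] [AddCommGroup X]
  [CovariantClass X X (· + ·) (· ≤ ·)] [Module ℝ X] [PosSMulMono ℝ X]
  {ι : Type*} [Preorder ι] {x : ι → X} {l : X}

theorem hatEl_monotone : Monotone (hatEl X (obDual X)) := by
  intro a b hab f hf
  have : 0 ≤ (f : X →ₗ[ℝ] ℝ) (b - a) := hf (b - a) (sub_nonneg.2 hab)
  change (f : X →ₗ[ℝ] ℝ) a ≤ (f : X →ₗ[ℝ] ℝ) b
  linarith [map_sub (f : X →ₗ[ℝ] ℝ) b a]

theorem EventuallyOrderBounded.hatEvOB (h : EventuallyOrderBounded x) : HatEvOB x :=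
  let ⟨_, _, α₀, hbt⟩ := h
  ⟨_, _, α₀, fun α hα => ⟨hatEl_monotone (hbt α hα).1, hatEl_monotone (hbt α hα).2⟩⟩

theorem HasBProp.eventuallyOrderBounded (hb : HasBProp X) (h : HatEvOB x) :
    EventuallyOrderBounded x := by
  obtain ⟨b', t', α₀, hbt⟩ := h
  obtain ⟨b, t, hA⟩ := hb (x '' Ici α₀) ⟨b', t', forall_mem_image.2 hbt⟩
  exact ⟨b, t, α₀, fun α hα => hA _ (mem_image_of_mem x hα)⟩

theorem OConvTo.eventuallyOrderBounded (h : OConvTo x l) : EventuallyOrderBounded x :=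
  let ⟨_, ⟨d, hd⟩, _, _, hD⟩ := h
  let ⟨α₀, hα₀⟩ := hD d hd
  ⟨l - d, l + d, α₀, hα₀⟩

theorem OConvTo.uoConvTo (h : OConvTo x l) : uoConvTo x l := by
  obtain ⟨D, hne, hdir, hglb, hD⟩ := h
  refine fun u hu => ⟨D, hne, hdir, hglb, fun d hd => ?_⟩
  obtain ⟨α₀, hα₀⟩ := hD d hd
  refine ⟨α₀, fun α hα => ⟨?_, ?_⟩⟩
  · calc (0 : X) - d ≤ 0 := sub_nonpos.2 (hglb.1 hd)
      _ ≤ |x α - l| ⊓ u := le_inf (abs_nonneg _) hu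
  · calc |x α - l| ⊓ u ≤ |x α - l| := inf_le_left
      _ ≤ d := abs_sub_le_iff_sub_le_and_le_add.2 (hα₀ α hα)
      _ = 0 + d := (zero_add d).symm

theorem uoConvTo.oConvTo [IsDirected ι (· ≤ ·)] (huo : uoConvTo x l)
    (hbdd : EventuallyOrderBounded x) : OConvTo x l := by
  obtain ⟨b, t, α₀, hbt⟩ := hbdd
  set c := |b - l| ⊔ |t - l|
  -- Eventually `|x α - l| ≤ c`, so uo-convergence tested against `u = c` is already order convergence.
  have hc : ∀ α, α₀ ≤ α → |x α - l| ⊓ c = |x α - l| := fun α hα =>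
    inf_eq_left.2 <| abs_le_abs_sup_abs (sub_le_sub_right (hbt α hα).1 l)
      (sub_le_sub_right (hbt α hα).2 l)
  obtain ⟨D, hne, hdir, hglb, hD⟩ := huo c ((abs_nonneg _).trans le_sup_left)
  refine ⟨D, hne, hdir, hglb, fun d hd => ?_⟩
  obtain ⟨α₁, hα₁⟩ := hD d hd
  obtain ⟨α₂, h₀₂, h₁₂⟩ := directed_of (· ≤ ·) α₀ α₁
  refine ⟨α₂, fun α hα => abs_sub_le_iff_sub_le_and_le_add.1 ?_⟩
  rw [← hc α (h₀₂.trans hα), ← zero_add d]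
  exact (hα₁ α (h₁₂.trans hα)).2

end Convergence

theorem statement6_general {X : Type u} [Lattice X] [AddCommGroup X]
    [CovariantClass X X (· + ·) (· ≤ ·)] [Module ℝ X] [PosSMulMono ℝ X]
    (hb : HasBProp X)
    {ι : Type v} [Preorder ι] [IsDirected ι (· ≤ ·)]
    (x : ι → X) (l : X) :
    bbuoConvTo x l ↔ OConvTo x l :=
  ⟨fun ⟨huo, hhat⟩ => huo.oConvTo (hb.eventuallyOrderBounded hhat),
    fun h => ⟨h.uoConvTo, h.eventuallyOrderBounded.hatEvOB⟩⟩

/-- If `X~` separates points and `X` has the `b`-property, then `bbuo`-convergence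
agrees with order convergence. -/
theorem statement6 {X : Type u} [Lattice X] [AddCommGroup X]
    [CovariantClass X X (· + ·) (· ≤ ·)] [Module ℝ X] [PosSMulMono ℝ X]
    (harch : IsArch X)
    (hsep : SepPoints X) (hb : HasBProp X)
    {ι : Type v} [Preorder ι] [Nonempty ι] [IsDirected ι (· ≤ ·)]
    (x : ι → X) (l : X) :
    bbuoConvTo x l ↔ OConvTo x l :=
  statement6_general hb x l
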